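/- arXiv:1506.04767 — 3 statements merged into one kernel-verified Lean document; each statement's English description precedes it below -/
import Mathlib

section
/- Let K > L ≥ 1 be integers, α > 1 and c > 0 reals. Consider real numbers b_1,...,b_K maximizing ∑_{i=1}^K b_i subject to b_1 ≥ 0, ∑_{i=1}^L b_i ≤ c, and 0 ≤ b_i ≤ α·b_{i-1} for i = 2,...,K. Then any optimal solution satisfies b_i = α·b_{i-1} for all i = 2,...,K. -/
/-- Any optimal solution of the LP (maximize ∑_{i=1}^K b_i subject to b_1 ≥ 0,
∑_{i=1}^L b_i ≤ c and 0 ≤ b_i ≤ α b_{i-1} for i = 2,…,K) satisfies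
b_i = α b_{i-1} for all i = 2,…,K. -/
theorem stmt_1 (K L : ℕ) (hL : 1 ≤ L) (hLK : L < K) (α c : ℝ) (hα : 1 < α) (hc : 0 < c)
    (b : ℕ → ℝ)
    (hfeas : 0 ≤ b 1 ∧ (∑ i ∈ Finset.Icc 1 L, b i) ≤ c ∧
      ∀ i ∈ Finset.Icc 2 K, 0 ≤ b i ∧ b i ≤ α * b (i - 1))
    (hopt : ∀ b' : ℕ → ℝ,
      (0 ≤ b' 1 ∧ (∑ i ∈ Finset.Icc 1 L, b' i) ≤ c ∧
        ∀ i ∈ Finset.Icc 2 K, 0 ≤ b' i ∧ b' i ≤ α * b' (i - 1)) →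
      (∑ i ∈ Finset.Icc 1 K, b' i) ≤ ∑ i ∈ Finset.Icc 1 K, b i) :
    ∀ i ∈ Finset.Icc 2 K, b i = α * b (i - 1) := by
  obtain ⟨hb1, hbud, hcons⟩ := hfeas
  intro j hj
  simp only [Finset.mem_Icc] at hj
  obtain ⟨hj2, hjK⟩ := hj
  by_contra hne
  have hα0 : (0:ℝ) < α := by linarith
  have hmem : j ∈ Finset.Icc 2 K := by simp [Finset.mem_Icc]; omega
  have hle : b j ≤ α * b (j-1) := (hcons j hmem).2
  have hbj0 : 0 ≤ b j := (hcons j hmem).1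
  have hslack : b j < α * b (j-1) := lt_of_le_of_ne hle hne
  have hbjm1 : 0 < b (j-1) := by nlinarith
  set s := α * b (j-1) - b j with hs
  have hs0 : 0 < s := by simp [hs]; linarith
  set S := ∑ i ∈ Finset.Icc j L, α ^ (i - j) with hS
  have hS0 : 0 ≤ S := Finset.sum_nonneg (fun i _ => pow_nonneg (le_of_lt hα0) _)
  obtain ⟨δ, e, hδ0, hδb, he0, heαδ, hδeS⟩ :
      ∃ δ e : ℝ, 0 ≤ δ ∧ δ ≤ b (j-1) ∧ 0 < e ∧ e + α*δ ≤ s ∧ δ = e * S := by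
    by_cases hjL : j ≤ L
    · have hS1 : 1 ≤ S := by
        have hjm : j ∈ Finset.Icc j L := by simp [Finset.mem_Icc]; omega
        calc (1:ℝ) = α ^ (j - j) := by simp
        _ ≤ S := Finset.single_le_sum (f := fun i => α ^ (i - j)) (fun i _ => pow_nonneg (le_of_lt hα0) _) hjm
      have hSpos : 0 < S := by linarith
      have hδpos : 0 < min (b (j-1)) (s/(1+α)) :=
        lt_min hbjm1 (div_pos hs0 (by linarith))
      refine ⟨min (b (j-1)) (s/(1+α)), min (b (j-1)) (s/(1+α)) / S,
        le_of_lt hδpos, min_le_left _ _, div_pos hδpos hSpos, ?_, ?_⟩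
      · have h1 : min (b (j-1)) (s/(1+α)) / S ≤ min (b (j-1)) (s/(1+α)) := by
          rw [div_le_iff₀ hSpos]; nlinarith [hδpos.le]
        have h2 : min (b (j-1)) (s/(1+α)) ≤ s/(1+α) := min_le_right _ _
        have h3 : (1+α) * (s/(1+α)) = s := by field_simp
        nlinarith
      · field_simp
    · have hSz : S = 0 := by
        rw [hS, Finset.Icc_eq_empty (by omega), Finset.sum_empty]
      exact ⟨0, s/(1+α), le_refl _, le_of_lt hbjm1, div_pos hs0 (by linarith), by
        rw [mul_zero, add_zero, div_le_iff₀ (by linarith : (0:ℝ) < 1+α)]; nlinarith, by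
        rw [hSz, mul_zero]⟩
  set g : ℕ → ℝ := fun i =>
    (if i = j-1 then -δ else 0) + (if j ≤ i then e * α^(i-j) else 0) with hg
  set b' : ℕ → ℝ := fun i => b i + g i with hb'
  -- sum of g over Icc 1 m for j-1 ≤ m
  have hgsum : ∀ m : ℕ, j - 1 ≤ m →
      ∑ i ∈ Finset.Icc 1 m, g i = -δ + e * ∑ i ∈ Finset.Icc j m, α^(i-j) := by
    intro m hm
    rw [hg]
    rw [Finset.sum_add_distrib]
    congr 1
    · rw [Finset.sum_ite_eq' (Finset.Icc 1 m) (j-1) (fun _ => -δ)]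
      simp only [Finset.mem_Icc]
      rw [if_pos ⟨by omega, hm⟩]
    · rw [Finset.mul_sum]
      rw [← Finset.sum_subset (Finset.Icc_subset_Icc_left (by omega : 1 ≤ j))]
      · apply Finset.sum_congr rfl
        intro i hi
        simp only [Finset.mem_Icc] at hi
        rw [if_pos hi.1]
      · intro i hi hni
        simp only [Finset.mem_Icc] at hi hni
        rw [if_neg (by omega)]
  -- feasibility of b'
  have hfeas' : 0 ≤ b' 1 ∧ (∑ i ∈ Finset.Icc 1 L, b' i) ≤ c ∧
      ∀ i ∈ Finset.Icc 2 K, 0 ≤ b' i ∧ b' i ≤ α * b' (i - 1) := by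
    refine ⟨?_, ?_, ?_⟩
    · simp only [hb', hg]
      by_cases h1 : 1 = j - 1
      · rw [if_pos h1, if_neg (by omega)]
        have : b (j-1) = b 1 := by rw [← h1]
        linarith
      · rw [if_neg h1, if_neg (by omega)]
        linarith
    · have hsum' : ∑ i ∈ Finset.Icc 1 L, g i = 0 := by
        by_cases hjm : j - 1 ≤ L
        · rw [hgsum L hjm, ← hS, hδeS]; ring
        · apply Finset.sum_eq_zero
          intro i hi
          simp only [Finset.mem_Icc] at hi
          simp only [hg]
          rw [if_neg (by omega), if_neg (by omega)]
          ring
      calc ∑ i ∈ Finset.Icc 1 L, b' i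
          = (∑ i ∈ Finset.Icc 1 L, b i) + ∑ i ∈ Finset.Icc 1 L, g i := by
            rw [hb', Finset.sum_add_distrib]
        _ ≤ c := by rw [hsum']; linarith
    · intro i hi
      simp only [Finset.mem_Icc] at hi
      obtain ⟨hi2, hiK⟩ := hi
      have hmemi : i ∈ Finset.Icc 2 K := by simp [Finset.mem_Icc]; omega
      obtain ⟨h0i, hli⟩ := hcons i hmemi
      simp only [hb', hg]
      rcases lt_trichotomy i j with hij | hij | hij
      · -- i < j
        have hij' : ¬ j ≤ i := by omega
        have hij'' : ¬ j ≤ i - 1 := by omega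
        have him1 : i - 1 ≠ j - 1 := by omega
        by_cases heq : i = j - 1
        · rw [if_pos heq, if_neg hij', if_neg him1, if_neg hij'']
          have hbi : b i = b (j-1) := by rw [heq]
          constructor
          · rw [hbi]; linarith
          · linarith
        · rw [if_neg heq, if_neg hij', if_neg him1, if_neg hij'']
          constructor <;> linarith
      · -- i = j
        subst hij
        rw [if_neg (by omega), if_pos (le_refl i), if_pos rfl, if_neg (by omega)]
        simp only [Nat.sub_self, pow_zero, mul_one]
        constructor
        · linarith
        · have hs' : s = α * b (i-1) - b i := hs
          nlinarith
      · -- i > j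
        have h1 : i ≠ j - 1 := by omega
        have h2 : i - 1 ≠ j - 1 := by omega
        have h3 : j ≤ i := by omega
        have h4 : j ≤ i - 1 := by omega
        rw [if_neg h1, if_pos h3, if_neg h2, if_pos h4]
        have hpow : α ^ (i - j) = α * α ^ (i - 1 - j) := by
          have : i - j = (i - 1 - j) + 1 := by omega
          rw [this, pow_succ]; ring
        have hpnn : 0 ≤ α ^ (i - j) := pow_nonneg (le_of_lt hα0) _
        constructor
        · nlinarith
        · rw [hpow]; nlinarith
  -- strict improvement
  have hgK : ∑ i ∈ Finset.Icc 1 K, g i = -δ + e * ∑ i ∈ Finset.Icc j K, α^(i-j) :=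
    hgsum K (by omega)
  have hlt : S < ∑ i ∈ Finset.Icc j K, α^(i-j) := by
    rw [hS]
    apply Finset.sum_lt_sum_of_subset (Finset.Icc_subset_Icc_right (le_of_lt hLK))
      (i := K)
    · simp [Finset.mem_Icc]; omega
    · simp [Finset.mem_Icc]; omega
    · exact pow_pos hα0 _
    · intro k _ _
      exact pow_nonneg (le_of_lt hα0) _
  have hgain : ∑ i ∈ Finset.Icc 1 K, b i < ∑ i ∈ Finset.Icc 1 K, b' i := by
    have : ∑ i ∈ Finset.Icc 1 K, b' i
        = (∑ i ∈ Finset.Icc 1 K, b i) + ∑ i ∈ Finset.Icc 1 K, g i := by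
      rw [hb', Finset.sum_add_distrib]
    rw [this, hgK, hδeS]
    have hmul := mul_lt_mul_of_pos_left hlt he0
    linarith
  exact absurd (hopt b' hfeas') (not_le.mpr hgain)
end

section
/- Let K > L ≥ 1 be integers, α > 1 and c > 0 reals. The maximum value of ∑_{i=1}^K b_i subject to b_1 ≥ 0, ∑_{i=1}^L b_i ≤ c, and 0 ≤ b_i ≤ α·b_{i-1} for i = 2,...,K equals c·(1 − α^K)/(1 − α^L), which is attained by b_i = α^{i-1}·c/(∑_{j=1}^L α^{j-1}). -/
/-- The maximum value of the LP equals c·(1 − α^K)/(1 − α^L), attained by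
b_i = α^{i-1}·c/(∑_{j=1}^L α^{j-1}). -/
theorem stmt_2 (K L : ℕ) (hL : 1 ≤ L) (hLK : L < K) (α c : ℝ) (hα : 1 < α) (hc : 0 < c) :
    IsGreatest
      {s : ℝ | ∃ b : ℕ → ℝ,
        (0 ≤ b 1 ∧ (∑ i ∈ Finset.Icc 1 L, b i) ≤ c ∧
          ∀ i ∈ Finset.Icc 2 K, 0 ≤ b i ∧ b i ≤ α * b (i - 1)) ∧
        s = ∑ i ∈ Finset.Icc 1 K, b i}
      (c * (1 - α ^ K) / (1 - α ^ L)) ∧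
    (∑ i ∈ Finset.Icc 1 K, α ^ (i - 1) * c / (∑ j ∈ Finset.Icc 1 L, α ^ (j - 1)))
      = c * (1 - α ^ K) / (1 - α ^ L) := by
  have hα0 : (0:ℝ) < α := lt_trans one_pos hα
  have hα1 : (0:ℝ) < α - 1 := by linarith
  have hgeom : ∀ n : ℕ, (∑ j ∈ Finset.Icc 1 n, α ^ (j - 1)) = (α ^ n - 1) / (α - 1) := by
    intro n
    rw [← Finset.Ico_add_one_right_eq_Icc, Finset.sum_Ico_eq_sum_range]
    have h1 : ∀ i : ℕ, (1 + i) - 1 = i := fun i => by omega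
    have h2 : n + 1 - 1 = n := by omega
    simp only [h1, h2]
    rw [geom_sum_eq hα.ne']
  have hLpos : (0:ℝ) < α ^ L - 1 := by
    have := one_lt_pow₀ hα (by omega : L ≠ 0); linarith
  set S : ℝ := ∑ j ∈ Finset.Icc 1 L, α ^ (j - 1) with hS
  have hSval : S = (α ^ L - 1) / (α - 1) := hgeom L
  have hSpos : 0 < S := by rw [hSval]; exact div_pos hLpos hα1
  have hval : ∀ n : ℕ, (∑ i ∈ Finset.Icc 1 n, α ^ (i - 1) * c / S)
      = c * (α ^ n - 1) / (α ^ L - 1) := by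
    intro n
    have h : ∀ i ∈ Finset.Icc 1 n, α ^ (i - 1) * c / S = α ^ (i - 1) * (c / S) := by
      intro i _; rw [mul_div_assoc]
    rw [Finset.sum_congr rfl h, ← Finset.sum_mul, hgeom n, hSval]
    field_simp
  have htarget : c * (1 - α ^ K) / (1 - α ^ L) = c * (α ^ K - 1) / (α ^ L - 1) := by
    rw [div_eq_div_iff (by nlinarith) (by nlinarith)]; ring
  have hvalK : (∑ i ∈ Finset.Icc 1 K, α ^ (i - 1) * c / S)
      = c * (1 - α ^ K) / (1 - α ^ L) := by rw [hval K, htarget]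
  have hfirst : (∑ i ∈ Finset.Icc 1 L, α ^ (i - 1) * c / S) = c := by
    rw [hval L]; field_simp
  refine ⟨⟨?_, ?_⟩, hvalK⟩
  · -- membership
    refine ⟨fun i => α ^ (i - 1) * c / S, ⟨?_, ?_, ?_⟩, hvalK.symm⟩
    · positivity
    · exact le_of_eq hfirst
    · intro i hi
      simp only [Finset.mem_Icc] at hi
      refine ⟨by positivity, ?_⟩
      show α ^ (i - 1) * c / S ≤ α * (α ^ (i - 1 - 1) * c / S)
      have hpe : α ^ (i - 1) = α * α ^ (i - 1 - 1) := by
        rw [← pow_succ']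
        congr 1
        omega
      rw [hpe, mul_div_assoc, mul_div_assoc, mul_assoc]
  · -- upper bound
    rintro s ⟨b, ⟨hb1, hbL, hbc⟩, rfl⟩
    have hchain : ∀ t i, 1 ≤ i → i + t ≤ K → b (i + t) ≤ α ^ t * b i := by
      intro t
      induction t with
      | zero => intro i _ _; simp
      | succ t ih =>
        intro i h1 h2
        have hstep := (hbc (i + t + 1) (Finset.mem_Icc.mpr ⟨by omega, by omega⟩)).2
        have e1 : i + t + 1 - 1 = i + t := by omega
        have e2 : i + (t + 1) = i + t + 1 := by omega
        rw [e1] at hstep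
        rw [e2]
        calc b (i + t + 1) ≤ α * b (i + t) := hstep
          _ ≤ α * (α ^ t * b i) :=
              mul_le_mul_of_nonneg_left (ih i h1 (by omega)) (le_of_lt hα0)
          _ = α ^ (t + 1) * b i := by ring
    have hbound : ∀ j, L + 1 ≤ j → j ≤ K → b j ≤ α ^ (j - 1) * c / S := by
      intro j hj1 hj2
      have key : S * b j ≤ α ^ (j - 1) * c := by
        have h2 : ∀ i ∈ Finset.Icc 1 L, α ^ (i - 1) * b j ≤ α ^ (j - 1) * b i := by
          intro i hi
          simp only [Finset.mem_Icc] at hi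
          have hc1 : b (i + (j - i)) ≤ α ^ (j - i) * b i := hchain (j - i) i hi.1 (by omega)
          have e : i + (j - i) = j := by omega
          rw [e] at hc1
          calc α ^ (i - 1) * b j ≤ α ^ (i - 1) * (α ^ (j - i) * b i) :=
                mul_le_mul_of_nonneg_left hc1 (by positivity)
            _ = α ^ (i - 1 + (j - i)) * b i := by rw [pow_add]; ring
            _ = α ^ (j - 1) * b i := by congr 2; omega
        calc S * b j = ∑ i ∈ Finset.Icc 1 L, α ^ (i - 1) * b j := by
              rw [hS, Finset.sum_mul]
          _ ≤ ∑ i ∈ Finset.Icc 1 L, α ^ (j - 1) * b i := Finset.sum_le_sum h2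
          _ = α ^ (j - 1) * ∑ i ∈ Finset.Icc 1 L, b i := by rw [Finset.mul_sum]
          _ ≤ α ^ (j - 1) * c := mul_le_mul_of_nonneg_left hbL (by positivity)
      rw [le_div_iff₀ hSpos]
      nlinarith [key]
    have hsplit : ∀ f : ℕ → ℝ, (∑ i ∈ Finset.Icc 1 K, f i)
        = (∑ i ∈ Finset.Icc 1 L, f i) + ∑ i ∈ Finset.Ioc L K, f i := by
      intro f
      rw [show Finset.Icc 1 K = Finset.Ioc 0 K from Finset.Icc_add_one_left_eq_Ioc 0 K,
        show Finset.Icc 1 L = Finset.Ioc 0 L from Finset.Icc_add_one_left_eq_Ioc 0 L,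
        Finset.sum_Ioc_consecutive f (Nat.zero_le L) hLK.le]
    have h3 : (∑ j ∈ Finset.Ioc L K, b j) ≤ ∑ j ∈ Finset.Ioc L K, α ^ (j - 1) * c / S :=
      Finset.sum_le_sum fun j hj => by
        simp only [Finset.mem_Ioc] at hj
        exact hbound j (by omega) hj.2
    rw [← hvalK]
    calc (∑ i ∈ Finset.Icc 1 K, b i)
        = (∑ i ∈ Finset.Icc 1 L, b i) + ∑ i ∈ Finset.Ioc L K, b i := hsplit b
      _ ≤ c + ∑ i ∈ Finset.Ioc L K, α ^ (i - 1) * c / S := add_le_add hbL h3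
      _ = (∑ i ∈ Finset.Icc 1 L, α ^ (i - 1) * c / S)
          + ∑ i ∈ Finset.Ioc L K, α ^ (i - 1) * c / S := by rw [hfirst]
      _ = ∑ i ∈ Finset.Icc 1 K, α ^ (i - 1) * c / S := (hsplit _).symm
end

section
/- Second-best structure in a separable maximization differs in exactly one coordinate: let I be a finite index set, each 𝒜_i a nonempty finite set with injective value functions v_i : 𝒜_i → ℝ (no ties: v_i(a) ≠ v_i(b) for a ≠ b), and assume also no ties among total values of distinct assignments. Order all assignments (a_i)_{i∈I} ∈ ∏ 𝒜_i by total value ∑_i v_i(a_i). Then for every l ≥ 2, the l-th best assignment agrees with some strictly better assignment in all coordinates except exactly one. -/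
/-!
If `b` is beaten by some assignment `a`, then, the objective being a sum of coordinatewise
values, `a` must beat `b` in at least one coordinate `j`; moving `b` to `a j` at that single
coordinate already gives a strictly better assignment.
-/

open Finset

section SeparableObjective

variable {ι : Type*} {A : ι → Type*} {M : Type*}

lemma Finset.card_filter_update_ne [Fintype ι] [DecidableEq ι] [∀ i, DecidableEq (A i)]
    (b : ∀ i, A i) {j : ι} {x : A j} (hx : x ≠ b j) :
    #{i | Function.update b j x i ≠ b i} = 1 := by
  rw [card_eq_one]
  refine ⟨j, eq_singleton_iff_unique_mem.mpr ⟨by simpa using hx, fun i hi => ?_⟩⟩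
  by_contra hij
  simp [Function.update_of_ne hij] at hi

variable [AddCommMonoid M] [PartialOrder M] [IsOrderedCancelAddMonoid M]

lemma Finset.sum_lt_sum_update [DecidableEq ι] (s : Finset ι) (v : ∀ i, A i → M)
    (b : ∀ i, A i) {j : ι} (hj : j ∈ s) {x : A j} (hx : v j (b j) < v j x) :
    ∑ i ∈ s, v i (b i) < ∑ i ∈ s, v i (Function.update b j x i) := by
  refine sum_lt_sum (fun i _ => ?_) ⟨j, hj, by simpa using hx⟩
  rcases eq_or_ne i j with rfl | hij
  · simpa using hx.le
  · simp [Function.update_of_ne hij]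

end SeparableObjective

theorem stmt_15_general {ι : Type*} [Fintype ι] (A : ι → Type*)
    [∀ i, DecidableEq (A i)]
    (v : ∀ i, A i → ℝ)
    (b : ∀ i, A i)
    (hnotbest : ∃ a' : ∀ i, A i, (∑ i, v i (b i)) < ∑ i, v i (a' i)) :
    ∃ a : ∀ i, A i, (∑ i, v i (b i)) < (∑ i, v i (a i)) ∧
      (Finset.univ.filter (fun i => a i ≠ b i)).card = 1 := by
  classical
  obtain ⟨a', hbetter⟩ := hnotbest
  obtain ⟨j, -, hj⟩ := exists_lt_of_sum_lt hbetter
  exact ⟨Function.update b j (a' j), sum_lt_sum_update _ v b (mem_univ j) hj,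
    card_filter_update_ne b fun h => hj.ne (congrArg (v j) h).symm⟩

/-- In a separable maximization with no per-coordinate ties and no ties among
total values, any assignment that is not optimal admits a strictly better
assignment differing from it in exactly one coordinate. -/
theorem stmt_15 {ι : Type*} [Fintype ι] [DecidableEq ι] (A : ι → Type*)
    [∀ i, Fintype (A i)] [∀ i, Nonempty (A i)] [∀ i, DecidableEq (A i)]
    (v : ∀ i, A i → ℝ)
    (hinj : ∀ i, Function.Injective (v i))
    (hties : ∀ a b : ∀ i, A i, a ≠ b → (∑ i, v i (a i)) ≠ ∑ i, v i (b i))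
    (b : ∀ i, A i)
    (hnotbest : ∃ a' : ∀ i, A i, (∑ i, v i (b i)) < ∑ i, v i (a' i)) :
    ∃ a : ∀ i, A i, (∑ i, v i (b i)) < (∑ i, v i (a i)) ∧
      (Finset.univ.filter (fun i => a i ≠ b i)).card = 1 :=
  stmt_15_general A v b hnotbest
end
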